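/- Let q be an even prime power and let B_1 be the minimal Besicovitch arrangement in 𝔽_q² consisting of the lines l(i, −i²) for i ∈ 𝔽_q together with l(∞, 0). Then x_0^{B_1} = q(q−1)/2, x_1^{B_1} = 0, x_2^{B_1} = q(q+1)/2, and x_m^{B_1} = 0 for every m ∉ {0,2}. -/

import Mathlib

/-! In characteristic 2 the line `l(s, -s²)` is `y = s x + s²`, so the slopes of the lines through
`(x, y)` are the roots of `s² + x s + y`. For `x = 0` there is exactly one, since squaring is a
bijection of `𝔽_q`, and the vertical line `x = 0` adds a second; for `x ≠ 0` the roots come in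
pairs `{s, s + x}`. Hence every point has multiplicity 0 or 2, and double counting the incidences,
`2 x₂ = (q + 1) q`, together with `x₀ + x₂ = q²` gives both counts. -/

open Finset

/-- `memLine s c P` says that the point `P ∈ 𝔽_q²` lies on the line `l(s, c)`:
for `s = some m` (slope `m ∈ 𝔽_q`) this is the line `y = m·x + c`,
and for `s = none` (slope `∞`) this is the vertical line `x = c`. -/
def memLine {F : Type*} [Field F] (s : Option F) (c : F) (P : F × F) : Prop :=
  match s with
  | none => P.1 = c
  | some m => P.2 = m * P.1 + c

instance {F : Type*} [Field F] [DecidableEq F] :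
    ∀ (s : Option F) (c : F) (P : F × F), Decidable (memLine s c P)
  | none, c, P => inferInstanceAs (Decidable (P.1 = c))
  | some m, c, P => inferInstanceAs (Decidable (P.2 = m * P.1 + c))

/-- The multiplicity of the point `P` in the minimal Besicovitch arrangement
`B = ⋃_{i ∈ 𝔽_q ∪ {∞}} l(i, b i)` determined by `b : 𝔽_q ∪ {∞} → 𝔽_q`,
i.e. the number of slopes `i` with `P ∈ l(i, b i)`. -/
def multPt {F : Type*} [Field F] [Fintype F] [DecidableEq F]
    (b : Option F → F) (P : F × F) : ℕ :=
  (Finset.univ.filter fun i : Option F => memLine i (b i) P).card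

/-- `xCount b m` is `x_m^B`: the number of points of `𝔽_q²` of multiplicity
exactly `m` in the minimal Besicovitch arrangement determined by `b`. -/
def xCount {F : Type*} [Field F] [Fintype F] [DecidableEq F]
    (b : Option F → F) (m : ℕ) : ℕ :=
  (Finset.univ.filter fun P : F × F => multPt b P = m).card

section Arrangement

variable {F : Type*} [Field F] [Fintype F] [DecidableEq F]

lemma card_filter_memLine (i : Option F) (c : F) :
    #{P : F × F | memLine i c P} = Fintype.card F := by
  cases i with
  | none =>
    rw [← card_univ, ← card_image_of_injective univ (Prod.mk_right_injective c)]
    congr 1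
    ext ⟨x, y⟩
    rw [mem_filter]
    simp [memLine, eq_comm]
  | some m =>
    have hinj : Function.Injective fun x : F => (x, m * x + c) :=
      fun x x' h => (Prod.ext_iff.mp h).1
    rw [← card_univ, ← card_image_of_injective univ hinj]
    congr 1
    ext ⟨x, y⟩
    rw [mem_filter]
    simp [memLine, eq_comm]

lemma sum_multPt (b : Option F → F) :
    ∑ P : F × F, multPt b P = (Fintype.card F + 1) * Fintype.card F := by
  simp only [multPt, card_filter]
  rw [sum_comm]
  simp only [← card_filter, card_filter_memLine, sum_const, card_univ, Fintype.card_option,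
    smul_eq_mul]

lemma multPt_eq_card_add_ite (b : Option F → F) (P : F × F) :
    multPt b P = #{s : F | memLine (some s) (b (some s)) P}
      + if memLine none (b none) P then 1 else 0 := by
  simp only [multPt, card_filter]
  rw [Fintype.sum_option, add_comm]

lemma xCount_eq_zero {b : Option F → F} {m : ℕ} (h : ∀ P, multPt b P ≠ m) :
    xCount b m = 0 := by
  simpa [xCount, filter_eq_empty_iff] using h

lemma xCount_zero_add_xCount_two {b : Option F → F}
    (h : ∀ P, multPt b P = 0 ∨ multPt b P = 2) :
    xCount b 0 + xCount b 2 = Fintype.card F * Fintype.card F := by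
  have hne : ∀ P, multPt b P ≠ 0 ↔ multPt b P = 2 := fun P => by
    rcases h P with h | h <;> simp [h]
  rw [xCount, xCount, ← filter_congr fun P _ => hne P, card_filter_add_card_filter_not,
    card_univ, Fintype.card_prod]

lemma two_mul_xCount_two {b : Option F → F} (h : ∀ P, multPt b P = 0 ∨ multPt b P = 2) :
    2 * xCount b 2 = (Fintype.card F + 1) * Fintype.card F := by
  rw [← sum_multPt b, ← sum_filter_add_sum_filter_not univ fun P => multPt b P = 2]
  rw [sum_congr rfl fun P hP => (mem_filter.mp hP).2, sum_const, smul_eq_mul, xCount, mul_comm,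
    sum_eq_zero fun P hP => (h P).resolve_right (mem_filter.mp hP).2, add_zero]

end Arrangement

section CharTwo

variable {F : Type*} [Field F] [Fintype F] [DecidableEq F] [CharP F 2]

lemma card_filter_sq_eq (y : F) : #{s : F | s ^ 2 = y} = 1 := by
  obtain ⟨s₀, rfl⟩ := (Finite.injective_iff_surjective.mp CharTwo.sq_injective) y
  exact card_eq_one.mpr ⟨s₀, by ext s; simp [CharTwo.sq_inj]⟩

lemma card_filter_sq_add_mul_eq {x : F} (hx : x ≠ 0) (y : F) :
    #{s : F | s ^ 2 + x * s = y} = 0 ∨ #{s : F | s ^ 2 + x * s = y} = 2 := by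
  by_cases hroot : ∃ s₁, s₁ ^ 2 + x * s₁ = y
  · obtain ⟨s₁, rfl⟩ := hroot
    right
    have hpair (s : F) : s ^ 2 + x * s = s₁ ^ 2 + x * s₁ ↔ s = s₁ ∨ s = s₁ + x := by
      have hfactor : s ^ 2 + x * s + (s₁ ^ 2 + x * s₁) = (s + s₁) * (s + (s₁ + x)) := by
        linear_combination (-(s * s₁)) * CharTwo.two_eq_zero (R := F)
      rw [← CharTwo.add_eq_zero, hfactor, mul_eq_zero, CharTwo.add_eq_zero, CharTwo.add_eq_zero]
    have hne : s₁ ≠ s₁ + x := fun h => hx (by simpa using h)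
    have hroots : #{s : F | s ^ 2 + x * s = s₁ ^ 2 + x * s₁} = #{s₁, s₁ + x} := by
      congr 1
      ext s
      simp [hpair]
    rw [hroots, card_pair hne]
  · left
    push Not at hroot
    simpa [filter_eq_empty_iff] using hroot

lemma multPt_neg_sq_eq_zero_or_two (P : F × F) :
    multPt (fun i : Option F => i.elim (0 : F) fun s => -(s ^ 2)) P = 0 ∨
      multPt (fun i : Option F => i.elim (0 : F) fun s => -(s ^ 2)) P = 2 := by
  obtain ⟨x, y⟩ := P
  have hline : ∀ s : F, y = s * x + -(s ^ 2) ↔ s ^ 2 + x * s = y := fun s => by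
    rw [CharTwo.neg_eq, eq_comm, mul_comm, add_comm]
  simp only [multPt_eq_card_add_ite, Option.elim, memLine, hline]
  by_cases hx : x = 0
  · simp [hx, card_filter_sq_eq]
  · simpa [hx] using card_filter_sq_add_mul_eq hx y

end CharTwo

/-- For `q` an even prime power and `B₁` the minimal Besicovitch arrangement consisting of the
lines `l(i, −i²)` for `i ∈ 𝔽_q` together with `l(∞, 0)`: `x_0^{B₁} = q(q−1)/2`,
`x_1^{B₁} = 0`, `x_2^{B₁} = q(q+1)/2`, and `x_m^{B₁} = 0` for `m ∉ {0,2}`. -/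
theorem stmt16 {F : Type*} [Field F] [Fintype F] [DecidableEq F]
    (q : ℕ) (hq : Fintype.card F = q) (heven : Even q) :
    xCount (fun i : Option F => i.elim (0 : F) fun s => -(s ^ 2)) 0 = q * (q - 1) / 2 ∧
      xCount (fun i : Option F => i.elim (0 : F) fun s => -(s ^ 2)) 1 = 0 ∧
      xCount (fun i : Option F => i.elim (0 : F) fun s => -(s ^ 2)) 2 = q * (q + 1) / 2 ∧
      ∀ m : ℕ, m ∉ ({0, 2} : Set ℕ) →
        xCount (fun i : Option F => i.elim (0 : F) fun s => -(s ^ 2)) m = 0 := by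
  have : CharP F 2 :=
    ringChar.of_eq (FiniteField.even_card_iff_char_two.mpr (hq ▸ Nat.even_iff.mp heven))
  have hmult := multPt_neg_sq_eq_zero_or_two (F := F)
  have hpartition := xCount_zero_add_xCount_two hmult
  have hdouble := two_mul_xCount_two hmult
  rw [hq] at hpartition hdouble
  have hvanish : ∀ m, m ≠ 0 → m ≠ 2 →
      xCount (fun i : Option F => i.elim (0 : F) fun s => -(s ^ 2)) m = 0 := fun m h0 h2 =>
    xCount_eq_zero fun P => by rcases hmult P with h | h <;> omega
  have hsq : q * (q - 1) + q = q * q ∧ q * (q + 1) = q * q + q ∧ (q + 1) * q = q * q + q := by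
    refine ⟨?_, by ring, by ring⟩
    cases q <;> simp [Nat.mul_succ]
  refine ⟨by omega, hvanish 1 one_ne_zero (by decide), by omega, fun m hm => ?_⟩
  simp only [Set.mem_insert_iff, Set.mem_singleton_iff, not_or] at hm
  exact hvanish m hm.1 hm.2
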